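/- arXiv:1212.5597 — 2 statements merged into one kernel-verified Lean document; each statement's English description precedes it below -/
import Mathlib

section
/- On the four-point set X = {w, x, y, z}, the collection τ consisting of ∅, {x}, {z}, {x,z}, and all sets containing y, is a topology on X that is 3-Hausdorff and not discrete. -/
/-- `X` is `τ`-Hausdorff: every subset `A` with `|A| ≥ τ` admits open neighborhoods
of its points with empty intersection. -/
def NHausdorff (X : Type*) [TopologicalSpace X] (τ : Cardinal) : Prop :=
  ∀ A : Set X, τ ≤ Cardinal.mk A →
    ∃ U : X → Set X, (∀ a ∈ A, IsOpen (U a) ∧ a ∈ U a) ∧ (⋂ a ∈ A, U a) = ∅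

/-!
The open sets are those containing `y` together with the subsets of `{x, z}`. Every point
other than `w` is isolated, so any three points include two distinct isolated ones, whose
singleton neighbourhoods are already disjoint; `{w}` itself is not open.
-/

open Cardinal Topology

theorem Set.exists_mem_ne_ne_of_three_le_mk {X : Type*} {A : Set X} (hA : 3 ≤ #A) (w : X) :
    ∃ b ∈ A, ∃ c ∈ A, b ≠ c ∧ b ≠ w ∧ c ≠ w := by
  by_cases hw : w ∈ A
  · obtain ⟨b, hbw, -⟩ := exists_ne_ne_of_three_le hA ⟨w, hw⟩ ⟨w, hw⟩
    obtain ⟨c, hcw, hcb⟩ := exists_ne_ne_of_three_le hA ⟨w, hw⟩ b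
    exact ⟨b, b.2, c, c.2, fun h => hcb (Subtype.ext h.symm),
      fun h => hbw (Subtype.ext h), fun h => hcw (Subtype.ext h)⟩
  · obtain ⟨b, c, hbc⟩ := two_le_iff.mp ((by norm_num : (2 : Cardinal) ≤ 3).trans hA)
    exact ⟨b, b.2, c, c.2, Subtype.coe_ne_coe.mpr hbc,
      ne_of_mem_of_not_mem b.2 hw, ne_of_mem_of_not_mem c.2 hw⟩

theorem nHausdorff_three_of_isOpen_singleton {X : Type*} [TopologicalSpace X] (w : X)
    (h : ∀ a ≠ w, IsOpen ({a} : Set X)) : NHausdorff X 3 := by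
  classical
  intro A hA
  obtain ⟨b, hb, c, hc, hbc, hbw, hcw⟩ := Set.exists_mem_ne_ne_of_three_le_mk hA w
  refine ⟨fun a => if a = w then Set.univ else {a}, fun a _ => ?_, ?_⟩
  · dsimp only
    split_ifs with haw
    · exact ⟨isOpen_univ, trivial⟩
    · exact ⟨h a haw, rfl⟩
  · refine Set.eq_empty_of_forall_notMem fun d hd => hbc ?_
    have hdb : d ∈ ({b} : Set X) := by simpa [hbw] using Set.mem_iInter₂.mp hd b hb
    have hdc : d ∈ ({c} : Set X) := by simpa [hcw] using Set.mem_iInter₂.mp hd c hc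
    exact hdb.symm.trans hdc

@[reducible]
def pointOrSubsetTopology {X : Type*} (p : X) (S : Set X) : TopologicalSpace X where
  IsOpen V := p ∈ V ∨ V ⊆ S
  isOpen_univ := Or.inl trivial
  isOpen_inter V W hV hW := by
    rcases hV with hV | hV
    · rcases hW with hW | hW
      · exact Or.inl ⟨hV, hW⟩
      · exact Or.inr (Set.inter_subset_right.trans hW)
    · exact Or.inr (Set.inter_subset_left.trans hV)
  isOpen_sUnion 𝒱 h𝒱 := by
    by_cases hp : ∃ V ∈ 𝒱, p ∈ V
    · exact Or.inl (Set.mem_sUnion.mpr hp)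
    · push Not at hp
      exact Or.inr (Set.sUnion_subset fun V hV => (h𝒱 V hV).resolve_left (hp V hV))

section pointOrSubsetTopology

variable {X : Type*} {p : X} {S V : Set X}

theorem isOpen_pointOrSubsetTopology_iff :
    IsOpen[pointOrSubsetTopology p S] V ↔ p ∈ V ∨ V ⊆ S :=
  Iff.rfl

theorem setOf_isOpen_pointOrSubsetTopology_pair (x z : X) :
    {V : Set X | IsOpen[pointOrSubsetTopology p {x, z}] V} =
      {∅, {x}, {z}, ({x, z} : Set X)} ∪ {V : Set X | p ∈ V} := by
  ext V
  simp only [isOpen_pointOrSubsetTopology_iff, Set.subset_pair_iff_eq, Set.mem_ofPred_eq,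
    Set.mem_union, Set.mem_insert_iff, Set.mem_singleton_iff]
  tauto

theorem isOpen_singleton_pointOrSubsetTopology_iff {a : X} :
    IsOpen[pointOrSubsetTopology p S] {a} ↔ a = p ∨ a ∈ S := by
  simp [isOpen_pointOrSubsetTopology_iff, eq_comm]

end pointOrSubsetTopology

theorem stmt_7_general {X : Type*} (w x y z : X)
    (hwx : w ≠ x) (hwy : w ≠ y) (hwz : w ≠ z)
    (huniv : (Set.univ : Set X) = {w, x, y, z}) :
    ∃ t : TopologicalSpace X,
      {V : Set X | t.IsOpen V} = {∅, {x}, {z}, ({x, z} : Set X)} ∪ {s : Set X | y ∈ s} ∧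
      @NHausdorff X t 3 ∧ ¬ (∀ V : Set X, t.IsOpen V) := by
  let t := pointOrSubsetTopology y {x, z}
  refine ⟨t, setOf_isOpen_pointOrSubsetTopology_pair x z, ?_, fun h => ?_⟩
  · refine nHausdorff_three_of_isOpen_singleton w fun a haw => ?_
    have ha : a ∈ ({w, x, y, z} : Set X) := huniv ▸ Set.mem_univ a
    rw [isOpen_singleton_pointOrSubsetTopology_iff]
    simp only [Set.mem_insert_iff, Set.mem_singleton_iff, haw, false_or] at ha ⊢
    tauto
  · have hw := isOpen_singleton_pointOrSubsetTopology_iff.mp (h {w})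
    simp [hwx, hwy, hwz] at hw

theorem stmt_7 {X : Type*} (w x y z : X)
    (hwx : w ≠ x) (hwy : w ≠ y) (hwz : w ≠ z) (hxy : x ≠ y) (hxz : x ≠ z) (hyz : y ≠ z)
    (huniv : (Set.univ : Set X) = {w, x, y, z}) :
    ∃ t : TopologicalSpace X,
      {V : Set X | t.IsOpen V} = {∅, {x}, {z}, ({x, z} : Set X)} ∪ {s : Set X | y ∈ s} ∧
      @NHausdorff X t 3 ∧ ¬ (∀ V : Set X, t.IsOpen V) :=
  stmt_7_general w x y z hwx hwy hwz huniv
end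

section
/- The space X = ([0,1] × {0}) ∪ {(1/2, 1/2)}, with Euclidean neighborhoods on [0,1] × {0} and neighborhood base U_n = {(1/2,1/2)} ∪ (((1/2 − 1/n, 1/2 + 1/n) \ {1/2}) × {0}) at (1/2,1/2), is 3-Hausdorff: for any three distinct points of X there exist open neighborhoods of them with empty intersection. -/
open Set

/-- The underlying set `X = ([0,1] × {0}) ∪ {(1/2, 1/2)} ⊆ ℝ²`. -/
def S1 : Set (ℝ × ℝ) := (Set.Icc (0 : ℝ) 1 ×ˢ {(0 : ℝ)}) ∪ {((1/2 : ℝ), (1/2 : ℝ))}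

/-- The basic neighborhood `U_n` of the special point `(1/2, 1/2)`:
`{(1/2,1/2)} ∪ (((1/2 − 1/n, 1/2 + 1/n) \ {1/2}) × {0})`. -/
def U1 (n : ℕ) : Set S1 :=
  {p : S1 | (p : ℝ × ℝ) = (1/2, 1/2) ∨
    ((p : ℝ × ℝ).2 = 0 ∧ (p : ℝ × ℝ).1 ∈ Set.Ioo (1/2 - 1/(n : ℝ)) (1/2 + 1/(n : ℝ)) ∧
      (p : ℝ × ℝ).1 ≠ 1/2)}

/-- Traces on the line `[0,1] × {0}` of Euclidean open sets. -/
def lineOpens1 : Set (Set S1) :=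
  {V | ∃ W : Set ℝ, IsOpen W ∧ V = {p : S1 | (p : ℝ × ℝ).2 = 0 ∧ (p : ℝ × ℝ).1 ∈ W}}

/-- The topology of the example: generated by the Euclidean neighborhoods of line points
and the sets `U_n` as a neighborhood base at `(1/2,1/2)`. -/
def T1ex : TopologicalSpace S1 :=
  TopologicalSpace.generateFrom (lineOpens1 ∪ {V | ∃ n : ℕ, 1 ≤ n ∧ V = U1 n})

/-- The special point `(1/2, 1/2)` of `X`. -/
noncomputable def sp1 : S1 := ⟨(1/2, 1/2), Or.inr rfl⟩

/-- The line point `(1/2, 0)` of `X`. -/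
noncomputable def bp1 : S1 := ⟨(1/2, 0), Or.inl ⟨⟨by norm_num, by norm_num⟩, rfl⟩⟩

lemma S1_cases (x : S1) : (x : ℝ × ℝ).2 = 0 ∨ (x : ℝ × ℝ) = (1/2, 1/2) := by
  rcases x.2 with h | h
  · exact Or.inl h.2
  · exact Or.inr h

lemma sep_line (p q : S1) (hp : (p : ℝ × ℝ).2 = 0) (hq : (q : ℝ × ℝ).2 = 0) (hne : p ≠ q) :
    ∃ Up Uq : Set S1, T1ex.IsOpen Up ∧ T1ex.IsOpen Uq ∧ p ∈ Up ∧ q ∈ Uq ∧ Up ∩ Uq = ∅ := by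
  have hx : (p : ℝ × ℝ).1 ≠ (q : ℝ × ℝ).1 := by
    intro h
    exact hne (Subtype.ext (Prod.ext h (hp.trans hq.symm)))
  obtain ⟨W1, W2, hW1, hW2, hpW, hqW, hdisj⟩ := t2_separation hx
  refine ⟨{r : S1 | (r : ℝ × ℝ).2 = 0 ∧ (r : ℝ × ℝ).1 ∈ W1},
    {r : S1 | (r : ℝ × ℝ).2 = 0 ∧ (r : ℝ × ℝ).1 ∈ W2},
    TopologicalSpace.GenerateOpen.basic _ (Or.inl ⟨W1, hW1, rfl⟩),
    TopologicalSpace.GenerateOpen.basic _ (Or.inl ⟨W2, hW2, rfl⟩),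
    ⟨hp, hpW⟩, ⟨hq, hqW⟩, ?_⟩
  ext r
  simp only [mem_inter_iff, mem_setOf_eq, mem_empty_iff_false, iff_false]
  rintro ⟨⟨-, h1⟩, ⟨-, h2⟩⟩
  exact (disjoint_left.mp hdisj h1) h2

theorem stmt_12 : @NHausdorff S1 T1ex 3 := by
  letI := T1ex
  intro A hA
  haveI : Nontrivial ↥A := Cardinal.one_lt_iff_nontrivial.mp (lt_of_lt_of_le (by norm_num) hA)
  obtain ⟨a, b, hab⟩ := exists_pair_ne ↥A
  obtain ⟨c, hca, hcb⟩ := Cardinal.three_le hA a b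
  have key : ∀ p q : S1, p ∈ A → q ∈ A → p ≠ q → (p : ℝ × ℝ).2 = 0 → (q : ℝ × ℝ).2 = 0 →
      ∃ U : S1 → Set S1, (∀ x ∈ A, IsOpen (U x) ∧ x ∈ U x) ∧ (⋂ x ∈ A, U x) = ∅ := by
    intro p q hpA hqA hne hp hq
    obtain ⟨Up, Uq, hUpo, hUqo, hpU, hqU, hd⟩ := sep_line p q hp hq hne
    refine ⟨fun x => if x = p then Up else if x = q then Uq else univ, ?_, ?_⟩
    · intro x _
      by_cases h1 : x = p
      · subst h1; simpa using ⟨hUpo, hpU⟩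
      by_cases h2 : x = q
      · subst h2; simp only [if_neg h1, if_pos rfl]; exact ⟨hUqo, hqU⟩
      · simp [h1, h2]
    · rw [eq_empty_iff_forall_notMem]
      intro r hr
      have hrp : r ∈ Up := by
        have := mem_iInter₂.mp hr p hpA; simpa using this
      have hrq : r ∈ Uq := by
        have := mem_iInter₂.mp hr q hqA
        simpa [if_neg hne.symm] using this
      have : r ∈ Up ∩ Uq := ⟨hrp, hrq⟩
      rw [hd] at this
      exact this
  have hab' : (a : S1) ≠ (b : S1) := fun h => hab (Subtype.ext h)
  have hca' : (c : S1) ≠ (a : S1) := fun h => hca (Subtype.ext h)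
  have hcb' : (c : S1) ≠ (b : S1) := fun h => hcb (Subtype.ext h)
  rcases S1_cases (a : S1) with ha | ha <;> rcases S1_cases (b : S1) with hb | hb <;>
    rcases S1_cases (c : S1) with hc | hc
  · exact key a b a.2 b.2 hab' ha hb
  · exact key a b a.2 b.2 hab' ha hb
  · exact key a c a.2 c.2 hca'.symm ha hc
  · exact absurd (Subtype.ext ((hb.trans hc.symm) : ((b:S1):ℝ×ℝ) = (c:S1))) hcb'.symm
  · exact key b c b.2 c.2 hcb'.symm hb hc
  · exact absurd (Subtype.ext ((ha.trans hc.symm) : ((a:S1):ℝ×ℝ) = (c:S1))) hca'.symm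
  · exact absurd (Subtype.ext ((ha.trans hb.symm) : ((a:S1):ℝ×ℝ) = (b:S1))) hab'
  · exact absurd (Subtype.ext ((ha.trans hb.symm) : ((a:S1):ℝ×ℝ) = (b:S1))) hab'
end
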